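/- arXiv:2007.11518 — 3 statements merged into one kernel-verified Lean document; each statement's English description precedes it below -/
import Mathlib

section
/- Let A be a 2×2 integer matrix with determinant 1 and trace > 2, and let 𝒳, 𝒴 ⊆ 𝕋² be disjoint nonempty finite f_A-invariant sets. Then: (i) for every primitive positive 𝒳-rectangle Δ disjoint from the lift 𝒴̃ there exists a unique rectangle D(Δ) such that Δ is a right horizontal subrectangle of D(Δ), the interior of D(Δ) is disjoint from 𝒴̃, and the left unstable side of D(Δ) contains a point of 𝒴̃; and (ii) there exist constants 1 < c < C such that c < ℓ^s(D(Δ))/ℓ^s(Δ) < C for every such Δ. -/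
/- Common setup: following the paper, we identify each subset of the torus
`𝕋² = ℝ²/ℤ²` with its (`ℤ²`-saturated) lift to `ℝ²`. -/

open Matrix Set
open scoped Pointwise

namespace Paper

/-- Points of the plane ℝ². -/
abbrev V : Type := Fin 2 → ℝ

/-- The integer lattice ℤ² ⊆ ℝ². -/
def lattice : Set V := Set.range fun m : Fin 2 → ℤ => fun i => (m i : ℝ)

/-- The linear action of an integer matrix on ℝ². -/
def actR (A : Matrix (Fin 2) (Fin 2) ℤ) (v : V) : V :=
  (A.map (Int.cast : ℤ → ℝ)).mulVec v

/-- `E ⊆ ℝ²` is the lift of a finite subset of the torus. -/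
def IsTorusFinite (E : Set V) : Prop := ∃ F : Set V, F.Finite ∧ E = F + lattice

/-- `E` is the lift of an `f_A`-invariant subset of the torus. -/
def IsInvariant (A : Matrix (Fin 2) (Fin 2) ℤ) (E : Set V) : Prop := actR A '' E = E

/-- `E` is the lift of a periodic orbit of `f_A`. -/
def IsPeriodicOrbit (A : Matrix (Fin 2) (Fin 2) ℤ) (E : Set V) : Prop :=
  ∃ x : V, ∃ p : ℕ, 0 < p ∧ (actR A)^[p] x - x ∈ lattice ∧
    E = {v | ∃ i : ℕ, v - (actR A)^[i] x ∈ lattice}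

/-- A rectangle `R(p; s, u)`, recorded via its basepoint `p` and its side
lengths `s, u > 0` (in the directions of the fixed eigenvectors `v^s, v^u`). -/
structure Rect where
  p : V
  s : ℝ
  u : ℝ
  s_pos : 0 < s
  u_pos : 0 < u

namespace Rect

/-- The set of points of the rectangle `R(p;s,u)`. -/
def carrier (vs vu : V) (R : Rect) : Set V :=
  {q | ∃ a b : ℝ, 0 ≤ a ∧ a ≤ R.s ∧ 0 ≤ b ∧ b ≤ R.u ∧ q = R.p + a • vs + b • vu}

/-- Endpoint of the increasing diagonal (whose origin is `R.p`). -/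
def incEnd (vs vu : V) (R : Rect) : V := R.p + R.s • vs + R.u • vu

/-- Origin of the decreasing diagonal. -/
def decOrigin (vs : V) (R : Rect) : V := R.p + R.s • vs

/-- Endpoint of the decreasing diagonal. -/
def decEnd (vu : V) (R : Rect) : V := R.p + R.u • vu

/-- `R` is a positive `E`-rectangle. -/
def IsPos (vs vu : V) (E : Set V) (R : Rect) : Prop :=
  R.p ∈ E ∧ R.incEnd vs vu ∈ E

/-- `R` is a negative `E`-rectangle. -/
def IsNeg (vs vu : V) (E : Set V) (R : Rect) : Prop :=
  R.decOrigin vs ∈ E ∧ R.decEnd vu ∈ E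

/-- `R` is a primitive positive `E`-rectangle. -/
def IsPrimPos (vs vu : V) (E : Set V) (R : Rect) : Prop :=
  R.IsPos vs vu E ∧ R.carrier vs vu ∩ E = {R.p, R.incEnd vs vu}

/-- `R` is a primitive negative `E`-rectangle. -/
def IsPrimNeg (vs vu : V) (E : Set V) (R : Rect) : Prop :=
  R.IsNeg vs vu E ∧ R.carrier vs vu ∩ E = {R.decOrigin vs, R.decEnd vu}

/-- Bottom stable side of a rectangle. -/
def botSide (vs : V) (R : Rect) : Set V :=
  {q | ∃ a : ℝ, 0 ≤ a ∧ a ≤ R.s ∧ q = R.p + a • vs}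

/-- Top stable side of a rectangle. -/
def topSide (vs vu : V) (R : Rect) : Set V :=
  {q | ∃ a : ℝ, 0 ≤ a ∧ a ≤ R.s ∧ q = R.p + a • vs + R.u • vu}

/-- Left unstable side of a rectangle. -/
def leftSide (vu : V) (R : Rect) : Set V :=
  {q | ∃ b : ℝ, 0 ≤ b ∧ b ≤ R.u ∧ q = R.p + b • vu}

/-- Interior of a rectangle. -/
def interior (vs vu : V) (R : Rect) : Set V :=
  {q | ∃ a b : ℝ, 0 < a ∧ a < R.s ∧ 0 < b ∧ b < R.u ∧ q = R.p + a • vs + b • vu}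

end Rect

/-- The (closed) quadrant `C₊₊(x)`. -/
def quadPP (vs vu x : V) : Set V :=
  {q | ∃ a b : ℝ, 0 ≤ a ∧ 0 ≤ b ∧ q = x + a • vs + b • vu}

/-- `D` is a right horizontal subrectangle of `R`. -/
def IsRightHorizSub (vs : V) (D R : Rect) : Prop :=
  D.s ≤ R.s ∧ D.u = R.u ∧ D.p = R.p + (R.s - D.s) • vs

/-- A positive `X`-string with origin `x`: a sequence of positive `X`-rectangles,
the first one having `x` as origin of its increasing diagonal, consecutive ones
meeting exactly at one point which is the endpoint of the increasing diagonal of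
the former and the origin of the increasing diagonal of the latter. -/
def IsPosString (vs vu : V) (X : Set V) (x : V) (R : ℕ → Rect) : Prop :=
  (∀ i, (R i).IsPos vs vu X) ∧ (R 0).p = x ∧
    ∀ i, (R i).carrier vs vu ∩ (R (i + 1)).carrier vs vu = {(R i).incEnd vs vu} ∧
      (R (i + 1)).p = (R i).incEnd vs vu

/-- A positive `X`-staircase with origin `x`. -/
def IsPosStaircase (vs vu : V) (X : Set V) (x : V) (R : ℕ → Rect) : Prop :=
  (∀ i, (R i).carrier vs vu ⊆ quadPP vs vu x) ∧
    ∃ Del : ℕ → Rect, IsPosString vs vu X x Del ∧ R 0 = Del 0 ∧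
      (∀ i, 1 ≤ i → IsRightHorizSub vs (Del i) (R i)) ∧
      (∀ i, (R i).topSide vs vu ⊆ (R (i + 1)).botSide vs) ∧
      ∃ C : ℝ, ∀ i, (Del (i + 1)).s / (Del i).s ≤ C

/-- Stable side lengths of the primitive positive `(X, x)`-rectangles. -/
def baseLengths (vs vu : V) (X : Set V) (x : V) : Set ℝ :=
  {s | ∃ R : Rect, R.IsPrimPos vs vu X ∧ R.p = x ∧ R.s = s}

/-- The Euclidean norm of a point of ℝ². -/
noncomputable def euclNorm (v : V) : ℝ := Real.sqrt ((v 0) ^ 2 + (v 1) ^ 2)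

/-- `Y` is the lift of an `ε`-dense subset of the torus, for the metric on the
torus induced by the Euclidean metric of ℝ². -/
def EDense (ε : ℝ) (Y : Set V) : Prop := ∀ v : V, ∃ y ∈ Y, euclNorm (v - y) ≤ ε

/-- The lift of `{(0,1/2), (1/2,0), (1/2,1/2)}`, i.e. the set
`{(0,1/2), (1/2,0), (1/2,1/2)} + ℤ²`. -/
def halfPoints : Set V :=
  {v : V | ∃ w ∈ ({![0, 1/2], ![1/2, 0], ![1/2, 1/2]} : Set V), v - w ∈ lattice}

/-- The lift of the point `(1/2,1/2)` of the torus, i.e. `(1/2,1/2) + ℤ²`. -/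
def halfCenter : Set V := {v : V | v - ![1/2, 1/2] ∈ lattice}

/-!
In the eigenbasis `(vs, vu)`, `f_A` acts by `(a, b) ↦ (a / λ, λ b)`. Lifts of finite subsets of the
torus are discrete and, when nonempty, `1/2`-dense. Renormalising by a power of `f_A`, every
coordinate box of large enough area therefore contains a point of such a lift; the invariant
quantity `|ab|` is bounded away from `0` on `𝒳̃ - 𝒳̃` and `𝒴̃ - 𝒳̃` off the axes; and no point of
`𝒴̃ - 𝒳̃` lies on the stable axis, since its forward orbit would accumulate in a discrete set.

`D(Δ)` is obtained by pushing the left side of `Δ` in the direction `-vs` up to the first time `t`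
at which it meets `𝒴̃`: `t` exists by discreteness, and uniqueness holds because no point of `𝒴̃`
lies on the stable lines through the corners of `Δ`. With `s, u` the sides of `Δ`,
`ℓ^s(D(Δ)) / ℓ^s(Δ) = 1 + (t u) / (s u)`, and both `t u` and `s u` are pinched between positive
constants by the facts above.
-/

open Module

lemma finite_lattice_inter_closedBall (r : ℝ) : (lattice ∩ Metric.closedBall 0 r).Finite := by
  refine ((Set.finite_Icc (fun _ => -⌈r⌉ : Fin 2 → ℤ) fun _ => ⌈r⌉).image
    fun m i => (m i : ℝ)).subset ?_
  rintro _ ⟨⟨m, rfl⟩, hm⟩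
  have hmi : ∀ i, |m i| ≤ ⌈r⌉ := fun i => by
    have h := (norm_le_pi_norm (fun i => (m i : ℝ)) i).trans (mem_closedBall_zero_iff.1 hm)
    rw [Real.norm_eq_abs, ← Int.cast_abs] at h
    exact_mod_cast h.trans (Int.le_ceil r)
  exact ⟨m, ⟨fun i => (abs_le.1 (hmi i)).1, fun i => (abs_le.1 (hmi i)).2⟩, rfl⟩

namespace IsTorusFinite

variable {Z : Set V}

lemma finite_inter_of_isBounded (hZ : IsTorusFinite Z) {K : Set V}
    (hK : Bornology.IsBounded K) : (Z ∩ K).Finite := by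
  obtain ⟨F, hF, rfl⟩ := hZ
  obtain ⟨ρ, hρ⟩ := hF.isBounded.subset_closedBall 0
  obtain ⟨r, hr⟩ := hK.subset_closedBall 0
  refine (hF.add (finite_lattice_inter_closedBall (r + ρ))).subset ?_
  rintro _ ⟨⟨f, hf, m, hm, rfl⟩, hK⟩
  refine ⟨f, hf, m, ⟨hm, mem_closedBall_zero_iff.2 ?_⟩, rfl⟩
  calc ‖m‖ = ‖(f + m) - f‖ := by rw [add_sub_cancel_left]
    _ ≤ ‖f + m‖ + ‖f‖ := norm_sub_le _ _
    _ ≤ r + ρ := add_le_add (mem_closedBall_zero_iff.1 (hr hK)) (mem_closedBall_zero_iff.1 (hρ hf))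

lemma exists_norm_sub_le (hZ : IsTorusFinite Z) (hne : Z.Nonempty) (v : V) :
    ∃ z ∈ Z, ‖z - v‖ ≤ 1 / 2 := by
  obtain ⟨F, hF, rfl⟩ := hZ
  obtain ⟨_, ⟨f, hf, -, -, rfl⟩⟩ := hne
  refine ⟨f + fun i => (round (v i - f i) : ℝ), Set.add_mem_add hf ⟨_, rfl⟩, ?_⟩
  refine (pi_norm_le_iff_of_nonneg (by norm_num)).2 fun i => ?_
  have h : (f + fun i => (round (v i - f i) : ℝ)) i - v i
      = -(v i - f i - round (v i - f i)) := by
    simp only [Pi.add_apply]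
    ring
  rw [Real.norm_eq_abs, Pi.sub_apply, h, abs_neg]
  exact abs_sub_round _

lemma sub {X Y : Set V} (hX : IsTorusFinite X) (hY : IsTorusFinite Y) :
    IsTorusFinite (X - Y) := by
  obtain ⟨F, hF, rfl⟩ := hX
  obtain ⟨G, hG, rfl⟩ := hY
  refine ⟨F - G, hF.sub hG, Set.Subset.antisymm ?_ ?_⟩
  · rintro _ ⟨_, ⟨f, hf, _, ⟨l, rfl⟩, rfl⟩, _, ⟨g, hg, _, ⟨l', rfl⟩, rfl⟩, rfl⟩
    exact ⟨f - g, Set.sub_mem_sub hf hg, _, ⟨l - l', rfl⟩, by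
      ext i
      simp only [Pi.sub_apply, Pi.add_apply, Int.cast_sub]
      ring⟩
  · rintro _ ⟨_, ⟨f, hf, g, hg, rfl⟩, _, ⟨l, rfl⟩, rfl⟩
    exact ⟨f + fun i => (l i : ℝ), Set.add_mem_add hf ⟨l, rfl⟩, g + 0,
      Set.add_mem_add hg ⟨0, by ext; simp⟩, by
        ext i
        simp only [add_zero, Pi.sub_apply, Pi.add_apply]
        ring⟩

end IsTorusFinite

section Coordinates

variable {K M : Type*} [Ring K] [AddCommGroup M] [Module K M] (b : Basis (Fin 2) K M)

lemma repr_smul_add_repr_smul (v : M) : b.repr v 0 • b 0 + b.repr v 1 • b 1 = v := by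
  have h := b.sum_repr v
  rwa [Fin.sum_univ_two] at h

lemma eq_add_smul_add_smul_iff {p q : M} {a c : K} :
    q = p + a • b 0 + c • b 1 ↔ b.repr q 0 = b.repr p 0 + a ∧ b.repr q 1 = b.repr p 1 + c := by
  rw [b.ext_elem_iff, Fin.forall_fin_two]
  simp

@[simp]
lemma repr_sub_smul_zero (p : M) (t : K) : b.repr (p - t • b 0) 0 = b.repr p 0 - t := by
  simp

@[simp]
lemma repr_sub_smul_one (p : M) (t : K) : b.repr (p - t • b 0) 1 = b.repr p 1 := by
  simp

@[simp]
lemma repr_sub_smul_add_smul_zero (p : M) (t c : K) :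
    b.repr (p - t • b 0 + c • b 1) 0 = b.repr p 0 - t := by
  simp

@[simp]
lemma repr_sub_smul_add_smul_one (p : M) (t c : K) :
    b.repr (p - t • b 0 + c • b 1) 1 = b.repr p 1 + c := by
  simp

end Coordinates

lemma isBounded_setOf_repr_mem_Icc {E : Type*} [NormedAddCommGroup E] [NormedSpace ℝ E]
    (b : Basis (Fin 2) ℝ E) (a a' c c' : ℝ) :
    Bornology.IsBounded {v : E | b.repr v 0 ∈ Set.Icc a a' ∧ b.repr v 1 ∈ Set.Icc c c'} := by
  refine (((isCompact_Icc (a := a) (b := a')).prod (isCompact_Icc (a := c) (b := c'))).image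
    (f := fun x : ℝ × ℝ => x.1 • b 0 + x.2 • b 1) (by fun_prop)).isBounded.subset ?_
  rintro v ⟨h0, h1⟩
  exact ⟨(b.repr v 0, b.repr v 1), ⟨h0, h1⟩, repr_smul_add_repr_smul b v⟩

lemma exists_basis_of_apply_eq_smul {K M : Type*} [Field K] [AddCommGroup M] [Module K M]
    (hM : finrank K M = 2) (f : M →ₗ[K] M) {μ ν : K} (hμν : μ ≠ ν) {v w : M}
    (hv : v ≠ 0) (hw : w ≠ 0) (hfv : f v = μ • v) (hfw : f w = ν • w) :
    ∃ b : Basis (Fin 2) K M, b 0 = v ∧ b 1 = w := by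
  have hli : LinearIndependent K ![v, w] :=
    Module.End.eigenvectors_linearIndependent' f ![μ, ν] (injective_pair_iff_ne.2 hμν) ![v, w]
      (Fin.forall_fin_two.2
        ⟨Module.End.hasEigenvector_iff.2 ⟨Module.End.mem_eigenspace_iff.2 hfv, hv⟩,
          Module.End.hasEigenvector_iff.2 ⟨Module.End.mem_eigenspace_iff.2 hfw, hw⟩⟩)
  exact ⟨basisOfLinearIndependentOfCardEqFinrank hli (by simp [hM]), by simp, by simp⟩

lemma _root_.Set.Finite.exists_pos_le {S : Set ℝ} (hS : S.Finite) (hpos : ∀ x ∈ S, 0 < x) :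
    ∃ δ > 0, ∀ x ∈ S, δ ≤ x := by
  rcases S.eq_empty_or_nonempty with rfl | hne
  · exact ⟨1, one_pos, by simp⟩
  · obtain ⟨m, hm, hmin⟩ := Set.exists_min_image S id hS hne
    exact ⟨m, hpos m hm, hmin⟩

lemma div_mem_Ioo_of_mul_bounds {t s u δ δ' M M' : ℝ} (hs : 0 < s) (hu : 0 < u) (hδ : 0 < δ)
    (hδ' : 0 < δ') (ht : δ ≤ t * u) (ht' : t * u < M') (hsu : s * u < M) (hsu' : δ' ≤ s * u) :
    t / s ∈ Set.Ioo (δ / M) (M' / δ') := by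
  have hsu₀ := mul_pos hs hu
  rw [← mul_div_mul_right t s hu.ne']
  exact ⟨(div_lt_div_iff₀ (hsu₀.trans hsu) hsu₀).2 (by nlinarith),
    (div_lt_div_iff₀ hsu₀ hδ').2 (by nlinarith)⟩

namespace Rect

variable {b : Basis (Fin 2) ℝ V} (R : Rect) (q : V)

lemma mem_carrier_iff : q ∈ R.carrier (b 0) (b 1) ↔
    b.repr R.p 0 ≤ b.repr q 0 ∧ b.repr q 0 ≤ b.repr R.p 0 + R.s ∧
      b.repr R.p 1 ≤ b.repr q 1 ∧ b.repr q 1 ≤ b.repr R.p 1 + R.u := by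
  simp only [carrier, eq_add_smul_add_smul_iff]
  constructor
  · rintro ⟨a, c, ha, ha', hc, hc', h0, h1⟩
    refine ⟨?_, ?_, ?_, ?_⟩ <;> linarith
  · rintro ⟨h0, h0', h1, h1'⟩
    exact ⟨_, _, sub_nonneg.2 h0, by linarith, sub_nonneg.2 h1, by linarith, by ring, by ring⟩

lemma mem_interior_iff : q ∈ R.interior (b 0) (b 1) ↔
    b.repr R.p 0 < b.repr q 0 ∧ b.repr q 0 < b.repr R.p 0 + R.s ∧
      b.repr R.p 1 < b.repr q 1 ∧ b.repr q 1 < b.repr R.p 1 + R.u := by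
  simp only [interior, eq_add_smul_add_smul_iff]
  constructor
  · rintro ⟨a, c, ha, ha', hc, hc', h0, h1⟩
    refine ⟨?_, ?_, ?_, ?_⟩ <;> linarith
  · rintro ⟨h0, h0', h1, h1'⟩
    exact ⟨_, _, sub_pos.2 h0, by linarith, sub_pos.2 h1, by linarith, by ring, by ring⟩

lemma repr_incEnd_zero : b.repr (R.incEnd (b 0) (b 1)) 0 = b.repr R.p 0 + R.s := by
  simp [incEnd]

lemma repr_incEnd_one : b.repr (R.incEnd (b 0) (b 1)) 1 = b.repr R.p 1 + R.u := by
  simp [incEnd]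

end Rect

lemma IsTorusFinite.exists_repr_near {Z : Set V} (hZ : IsTorusFinite Z) (hne : Z.Nonempty)
    (b : Basis (Fin 2) ℝ V) :
    ∃ r > 0, ∀ a c : ℝ, ∃ z ∈ Z, |b.repr z 0 - a| < r ∧ |b.repr z 1 - c| < r := by
  let φ : Fin 2 → V →L[ℝ] ℝ := fun i => LinearMap.toContinuousLinearMap (b.coord i)
  have hφ : ∀ i, 0 ≤ ‖φ i‖ := fun i => norm_nonneg _
  refine ⟨‖φ 0‖ + ‖φ 1‖ + 1, by positivity, fun a c => ?_⟩
  obtain ⟨z, hz, hzv⟩ := hZ.exists_norm_sub_le hne (a • b 0 + c • b 1)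
  have near : ∀ i, |b.repr z i - b.repr (a • b 0 + c • b 1) i| ≤ ‖φ i‖ * (1 / 2) := fun i => by
    have h := (φ i).le_opNorm (z - (a • b 0 + c • b 1))
    rw [LinearMap.coe_toContinuousLinearMap', Basis.coord_apply, map_sub,
      Finsupp.sub_apply, Real.norm_eq_abs] at h
    exact h.trans (mul_le_mul_of_nonneg_left hzv (hφ i))
  have h0 : |b.repr z 0 - a| ≤ ‖φ 0‖ * (1 / 2) := by simpa using near 0
  have h1 : |b.repr z 1 - c| ≤ ‖φ 1‖ * (1 / 2) := by simpa using near 1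
  exact ⟨z, hz, by linarith [hφ 0, hφ 1], by linarith [hφ 0, hφ 1]⟩

structure IsHyperbolicBasis (f : V →ₗ[ℝ] V) (lam : ℝ) (b : Basis (Fin 2) ℝ V) : Prop where
  one_lt : 1 < lam
  apply_zero : f (b 0) = lam⁻¹ • b 0
  apply_one : f (b 1) = lam • b 1

def IsBoxDense (b : Basis (Fin 2) ℝ V) (Z : Set V) (M : ℝ) : Prop :=
  ∀ a c s u : ℝ, 0 < s → 0 < u → M ≤ s * u →
    ∃ z ∈ Z, b.repr z 0 ∈ Set.Ioo a (a + s) ∧ b.repr z 1 ∈ Set.Ioo c (c + u)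

lemma image_sub_eq {f : V →ₗ[ℝ] V} {X Y : Set V} (hfX : f '' X = X) (hfY : f '' Y = Y) :
    f '' (X - Y) = X - Y := by
  rw [Set.image_sub, hfX, hfY]

namespace IsHyperbolicBasis

variable {f : V →ₗ[ℝ] V} {lam : ℝ} {b : Basis (Fin 2) ℝ V}

lemma pos (hb : IsHyperbolicBasis f lam b) : 0 < lam := zero_lt_one.trans hb.one_lt

lemma repr_apply_zero (hb : IsHyperbolicBasis f lam b) (v : V) :
    b.repr (f v) 0 = lam⁻¹ * b.repr v 0 := by
  conv_lhs => rw [← repr_smul_add_repr_smul b v]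
  simp [hb.apply_zero, hb.apply_one, mul_comm]

lemma repr_apply_one (hb : IsHyperbolicBasis f lam b) (v : V) :
    b.repr (f v) 1 = lam * b.repr v 1 := by
  conv_lhs => rw [← repr_smul_add_repr_smul b v]
  simp [hb.apply_zero, hb.apply_one, mul_comm]

lemma exists_mem_repr_zpow (hb : IsHyperbolicBasis f lam b) {Z : Set V} (hZ : f '' Z = Z)
    {z : V} (hz : z ∈ Z) (k : ℤ) :
    ∃ z' ∈ Z, b.repr z' 0 = (lam ^ k)⁻¹ * b.repr z 0 ∧ b.repr z' 1 = lam ^ k * b.repr z 1 := by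
  have hlam := hb.pos.ne'
  induction k using Int.induction_on with
  | zero => exact ⟨z, hz, by simp, by simp⟩
  | succ k ih =>
    obtain ⟨z', hz', h0, h1⟩ := ih
    refine ⟨f z', hZ ▸ Set.mem_image_of_mem f hz', ?_, ?_⟩
    · rw [hb.repr_apply_zero, h0, zpow_add_one₀ hlam]
      ring
    · rw [hb.repr_apply_one, h1, zpow_add_one₀ hlam]
      ring
  | pred k ih =>
    obtain ⟨z', hz', h0, h1⟩ := ih
    obtain ⟨w, hw, rfl⟩ : z' ∈ f '' Z := hZ.symm ▸ hz'
    rw [hb.repr_apply_zero] at h0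
    rw [hb.repr_apply_one] at h1
    refine ⟨w, hw, ?_, ?_⟩
    · rw [zpow_sub_one₀ hlam]
      field_simp at h0 ⊢
      linear_combination h0
    · rw [zpow_sub_one₀ hlam]
      field_simp at h1 ⊢
      linear_combination h1

/-- A nonzero point of `Z` on the stable axis with minimal `|b.repr z 0|` would be beaten by its
image under `f`. -/
lemma eq_zero_of_repr_one_eq_zero (hb : IsHyperbolicBasis f lam b) {Z : Set V}
    (hZ : IsTorusFinite Z) (hfZ : Set.MapsTo f Z Z) {z : V} (hz : z ∈ Z)
    (hz1 : b.repr z 1 = 0) : z = 0 := by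
  by_contra hne
  have hz0 : b.repr z 0 ≠ 0 := fun h =>
    hne (b.ext_elem_iff.2 (Fin.forall_fin_two.2 ⟨by simpa using h, by simpa using hz1⟩))
  set R := |b.repr z 0|
  set W := Z ∩ {v | b.repr v 0 ∈ Set.Icc (-R) R ∧ b.repr v 1 ∈ Set.Icc 0 0} ∩
    {v | b.repr v 0 ≠ 0}
  have hW : W.Finite :=
    (hZ.finite_inter_of_isBounded (isBounded_setOf_repr_mem_Icc b _ _ _ _)).subset
      Set.inter_subset_left
  have hzW : z ∈ W := ⟨⟨hz, abs_le.1 le_rfl, by simp [hz1]⟩, hz0⟩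
  obtain ⟨w, ⟨⟨hwZ, hw0, hw1⟩, hw⟩, hmin⟩ :=
    Set.exists_min_image W (fun v => |b.repr v 0|) hW ⟨z, hzW⟩
  have hlam := hb.pos
  have hshrink : |b.repr (f w) 0| < |b.repr w 0| := by
    rw [hb.repr_apply_zero, abs_mul, abs_inv, abs_of_pos hlam]
    exact mul_lt_of_lt_one_left (abs_pos.2 hw) (inv_lt_one_of_one_lt₀ hb.one_lt)
  have hfwW : f w ∈ W := by
    refine ⟨⟨hfZ hwZ, abs_le.1 (hshrink.le.trans (abs_le.2 hw0)), ?_⟩, ?_⟩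
    · rw [hb.repr_apply_one, le_antisymm hw1.2 hw1.1]
      simp
    · show b.repr (f w) 0 ≠ 0
      rw [hb.repr_apply_zero]
      exact mul_ne_zero (inv_ne_zero hlam.ne') hw
  exact (hmin _ hfwW).not_gt hshrink

/-- The product of the two coordinates is `f`-invariant; moving a point into the fundamental
domain `1 ≤ |b.repr z 0| < lam` leaves finitely many candidates for small products. -/
lemma exists_pos_le_abs_repr_mul (hb : IsHyperbolicBasis f lam b) {Z : Set V}
    (hZ : IsTorusFinite Z) (hfZ : f '' Z = Z) :
    ∃ δ > 0, ∀ z ∈ Z, b.repr z 0 * b.repr z 1 ≠ 0 → δ ≤ |b.repr z 0 * b.repr z 1| := by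
  obtain ⟨δ, hδ, hδW⟩ :=
    (((hZ.finite_inter_of_isBounded (isBounded_setOf_repr_mem_Icc b (-lam) lam (-1) 1)
      ).inter_of_left {v | b.repr v 0 * b.repr v 1 ≠ 0}).image
        fun v => |b.repr v 0 * b.repr v 1|).exists_pos_le
      (by rintro _ ⟨v, ⟨-, hv⟩, rfl⟩; exact abs_pos.2 hv)
  refine ⟨min δ 1, lt_min hδ one_pos, fun z hz hz01 => ?_⟩
  obtain ⟨k, hk1, hk2⟩ := exists_mem_Ico_zpow (abs_pos.2 (left_ne_zero_of_mul hz01)) hb.one_lt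
  obtain ⟨z', hz', h0, h1⟩ := hb.exists_mem_repr_zpow hfZ hz k
  have hμ : 0 < lam ^ k := zpow_pos hb.pos k
  have hprod : b.repr z' 0 * b.repr z' 1 = b.repr z 0 * b.repr z 1 := by
    rw [h0, h1]
    field_simp
  have hz'0 : 1 ≤ |b.repr z' 0| ∧ |b.repr z' 0| ≤ lam := by
    rw [h0, abs_mul, abs_inv, abs_of_pos hμ, inv_mul_le_iff₀ hμ, le_inv_mul_iff₀ hμ, mul_one]
    rw [zpow_add_one₀ hb.pos.ne'] at hk2
    exact ⟨hk1, hk2.le⟩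
  rw [← hprod] at hz01 ⊢
  by_cases hz'1 : |b.repr z' 1| ≤ 1
  · exact (min_le_left _ _).trans
      (hδW _ ⟨z', ⟨⟨hz', abs_le.1 hz'0.2, abs_le.1 hz'1⟩, hz01⟩, rfl⟩)
  · rw [abs_mul]
    nlinarith [min_le_right δ 1]

/-- A power `f ^ k` maps a box of area at least `lam * (2 r) ^ 2` onto a box with both sides at
least `2 r`, which contains a point of `Z` as soon as `r` is a covering radius of `Z`. -/
lemma exists_isBoxDense (hb : IsHyperbolicBasis f lam b) {Z : Set V} (hZ : IsTorusFinite Z)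
    (hne : Z.Nonempty) (hfZ : f '' Z = Z) : ∃ M > 0, IsBoxDense b Z M := by
  have hlam := hb.pos
  obtain ⟨r, hr, hnear⟩ := hZ.exists_repr_near hne b
  refine ⟨lam * (2 * r) ^ 2, by positivity, fun a c s u hs hu hsu => ?_⟩
  obtain ⟨k, hk1, hk2⟩ := exists_mem_Ico_zpow (div_pos hs (by positivity : 0 < 2 * r)) hb.one_lt
  rw [zpow_add_one₀ hlam.ne', div_lt_iff₀ (by positivity)] at hk2
  rw [le_div_iff₀ (by positivity)] at hk1
  set μ := lam ^ k with hμdef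
  have hμ : 0 < μ := zpow_pos hlam k
  have hμu : 2 * r < μ * u := by
    have : 2 * r * lam * (2 * r) < 2 * r * lam * (μ * u) := by nlinarith
    exact lt_of_mul_lt_mul_left this (by positivity)
  obtain ⟨z', hz', h0', h1'⟩ := hnear (μ⁻¹ * (a + s / 2)) (μ * (c + u / 2))
  obtain ⟨z, hz, h0, h1⟩ := hb.exists_mem_repr_zpow hfZ hz' (-k)
  simp only [_root_.zpow_neg, inv_inv, ← hμdef] at h0 h1
  have e0 : b.repr z 0 - (a + s / 2) = μ * (b.repr z' 0 - μ⁻¹ * (a + s / 2)) := by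
    rw [h0]
    field_simp
  have e1 : b.repr z 1 - (c + u / 2) = μ⁻¹ * (b.repr z' 1 - μ * (c + u / 2)) := by
    rw [h1]
    field_simp
  have d0 : |b.repr z 0 - (a + s / 2)| < s / 2 := by
    rw [e0, abs_mul, abs_of_pos hμ]
    nlinarith
  have d1 : |b.repr z 1 - (c + u / 2)| < u / 2 := by
    rw [e1, abs_mul, abs_of_pos (inv_pos.2 hμ), inv_mul_lt_iff₀ hμ]
    nlinarith
  obtain ⟨d0, d0'⟩ := abs_lt.1 d0
  obtain ⟨d1, d1'⟩ := abs_lt.1 d1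
  exact ⟨z, hz, ⟨by linarith, by linarith⟩, by linarith, by linarith⟩

variable {X Y : Set V}

lemma repr_one_ne_of_mem (hb : IsHyperbolicBasis f lam b) (hXY : Disjoint X Y)
    (hX : IsTorusFinite X) (hY : IsTorusFinite Y) (hfX : f '' X = X) (hfY : f '' Y = Y) :
    ∀ x ∈ X, ∀ y ∈ Y, b.repr y 1 ≠ b.repr x 1 := by
  intro x hx y hy h
  have h0 := hb.eq_zero_of_repr_one_eq_zero (hY.sub hX)
    (Set.mapsTo_iff_image_subset.2 (image_sub_eq hfY hfX).subset) (Set.sub_mem_sub hy hx)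
    (by rw [map_sub, Finsupp.sub_apply, h, sub_self])
  exact Set.disjoint_left.1 hXY hx (sub_eq_zero.1 h0 ▸ hy)

lemma exists_pos_le_mul_of_isPos (hb : IsHyperbolicBasis f lam b) (hX : IsTorusFinite X)
    (hfX : f '' X = X) : ∃ δ > 0, ∀ R : Rect, R.IsPos (b 0) (b 1) X → δ ≤ R.s * R.u := by
  obtain ⟨δ, hδ, h⟩ := hb.exists_pos_le_abs_repr_mul (hX.sub hX) (image_sub_eq hfX hfX)
  refine ⟨δ, hδ, fun R hR => ?_⟩
  have hdiag : b.repr (R.incEnd (b 0) (b 1) - R.p) 0 * b.repr (R.incEnd (b 0) (b 1) - R.p) 1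
      = R.s * R.u := by
    rw [map_sub, Finsupp.sub_apply, Finsupp.sub_apply, R.repr_incEnd_zero, R.repr_incEnd_one]
    ring
  have hsu := mul_pos R.s_pos R.u_pos
  have hδsu := h _ (Set.sub_mem_sub hR.2 hR.1) (hdiag ▸ hsu.ne')
  rwa [hdiag, abs_of_pos hsu] at hδsu

end IsHyperbolicBasis

attribute [ext] Rect

def hitTimes (vs vu : V) (Y : Set V) (p : V) (u : ℝ) : Set ℝ :=
  {t | 0 < t ∧ ∃ c, 0 ≤ c ∧ c ≤ u ∧ p - t • vs + c • vu ∈ Y}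

/-- The rectangle `D(Δ)`: `Δ` extended to the left up to the first point of `Y` met by its left
side when pushed in the direction `-vs` (if there is none, `sInf ∅ = 0` and `Δ` is returned). -/
noncomputable def Rect.extendLeft (vs vu : V) (Y : Set V) (R : Rect) : Rect where
  p := R.p - sInf (hitTimes vs vu Y R.p R.u) • vs
  s := R.s + sInf (hitTimes vs vu Y R.p R.u)
  u := R.u
  s_pos := add_pos_of_pos_of_nonneg R.s_pos (Real.sInf_nonneg fun _ ht => ht.1.le)
  u_pos := R.u_pos

namespace Rect

variable (vs vu : V) (Y : Set V) (R : Rect)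

lemma extendLeft_p : (R.extendLeft vs vu Y).p = R.p - sInf (hitTimes vs vu Y R.p R.u) • vs := rfl

lemma extendLeft_s : (R.extendLeft vs vu Y).s = R.s + sInf (hitTimes vs vu Y R.p R.u) := rfl

lemma extendLeft_u : (R.extendLeft vs vu Y).u = R.u := rfl

lemma extendLeft_s_div :
    (R.extendLeft vs vu Y).s / R.s = 1 + sInf (hitTimes vs vu Y R.p R.u) / R.s := by
  rw [extendLeft_s, add_div, div_self R.s_pos.ne']

lemma isRightHorizSub_extendLeft : IsRightHorizSub vs R (R.extendLeft vs vu Y) :=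
  ⟨le_add_of_nonneg_right (Real.sInf_nonneg fun _ ht => ht.1.le), rfl, by simp [extendLeft]⟩

variable {vs vu Y R} in
lemma leftSide_extendLeft_inter_nonempty
    (h : sInf (hitTimes vs vu Y R.p R.u) ∈ hitTimes vs vu Y R.p R.u) :
    ((R.extendLeft vs vu Y).leftSide vu ∩ Y).Nonempty := by
  obtain ⟨-, c, hc0, hcu, hy⟩ := h
  exact ⟨_, ⟨c, hc0, hcu, rfl⟩, hy⟩

end Rect

section HitTimes

variable {b : Basis (Fin 2) ℝ V} {Y : Set V} {p : V} {u M : ℝ}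

lemma sub_repr_mem_hitTimes {y : V} (hy : y ∈ Y) (h0 : b.repr y 0 < b.repr p 0)
    (h1 : b.repr p 1 ≤ b.repr y 1) (h1' : b.repr y 1 ≤ b.repr p 1 + u) :
    b.repr p 0 - b.repr y 0 ∈ hitTimes (b 0) (b 1) Y p u := by
  refine ⟨sub_pos.2 h0, b.repr y 1 - b.repr p 1, sub_nonneg.2 h1, by linarith, ?_⟩
  convert hy using 1
  rw [b.ext_elem_iff, Fin.forall_fin_two]
  simp

lemma exists_mem_hitTimes_mul_lt (hY : IsBoxDense b Y M) (hM : 0 < M) (p : V) (hu : 0 < u) :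
    ∃ t ∈ hitTimes (b 0) (b 1) Y p u, t * u < M := by
  obtain ⟨y, hy, ⟨h0, h0'⟩, h1, h1'⟩ := hY (b.repr p 0 - M / u) (b.repr p 1) (M / u) u
    (by positivity) hu (by rw [div_mul_cancel₀ _ hu.ne'])
  refine ⟨_, sub_repr_mem_hitTimes hy (by linarith) h1.le h1'.le, ?_⟩
  rw [← lt_div_iff₀ hu]
  linarith

lemma sInf_hitTimes_mul_lt (hY : IsBoxDense b Y M) (hM : 0 < M) (p : V) (hu : 0 < u) :
    sInf (hitTimes (b 0) (b 1) Y p u) * u < M := by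
  obtain ⟨t, ht, htM⟩ := exists_mem_hitTimes_mul_lt hY hM p hu
  exact (mul_le_mul_of_nonneg_right (csInf_le ⟨0, fun _ h => h.1.le⟩ ht) hu.le).trans_lt htM

lemma isLeast_hitTimes (hY : IsTorusFinite Y) (hne : (hitTimes (b 0) (b 1) Y p u).Nonempty) :
    IsLeast (hitTimes (b 0) (b 1) Y p u) (sInf (hitTimes (b 0) (b 1) Y p u)) := by
  set H := hitTimes (b 0) (b 1) Y p u
  obtain ⟨t₁, ht₁⟩ := hne
  have hfin : (H ∩ Set.Iic t₁).Finite := by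
    refine ((hY.finite_inter_of_isBounded (isBounded_setOf_repr_mem_Icc b
      (b.repr p 0 - t₁) (b.repr p 0) (b.repr p 1) (b.repr p 1 + u))).image
      fun y => b.repr p 0 - b.repr y 0).subset ?_
    rintro t ⟨⟨ht, c, hc0, hcu, hy⟩, htt₁⟩
    rw [Set.mem_Iic] at htt₁
    refine ⟨_, ⟨hy, ?_, ?_⟩, ?_⟩ <;>
      simp only [repr_sub_smul_add_smul_zero, repr_sub_smul_add_smul_one, Set.mem_Icc]
    · exact ⟨by linarith, by linarith⟩
    · exact ⟨by linarith, by linarith⟩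
    · ring
  obtain ⟨t₀, ⟨ht₀, -⟩, hmin⟩ := Set.exists_min_image _ id hfin ⟨t₁, ht₁, Set.self_mem_Iic⟩
  have hleast : IsLeast H t₀ := ⟨ht₀, fun t ht => (le_total t t₁).elim
    (fun h => hmin t ⟨ht, h⟩) fun h => (hmin t₁ ⟨ht₁, Set.self_mem_Iic⟩).trans h⟩
  rwa [hleast.csInf_eq]

end HitTimes

namespace Rect

variable {b : Basis (Fin 2) ℝ V} {X Y : Set V} (R : Rect)

lemma disjoint_interior_extendLeft
    (hlb : sInf (hitTimes (b 0) (b 1) Y R.p R.u) ∈ lowerBounds (hitTimes (b 0) (b 1) Y R.p R.u))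
    (hR : Disjoint (R.carrier (b 0) (b 1)) Y) :
    Disjoint ((R.extendLeft (b 0) (b 1) Y).interior (b 0) (b 1)) Y := by
  refine Set.disjoint_left.2 fun q hq hqY => ?_
  obtain ⟨h0, h0', h1, h1'⟩ := (mem_interior_iff _ q).1 hq
  simp only [extendLeft_p, extendLeft_s, extendLeft_u, repr_sub_smul_zero,
    repr_sub_smul_one] at h0 h0' h1 h1'
  rcases lt_or_ge (b.repr q 0) (b.repr R.p 0) with hlt | hge
  · have := hlb (sub_repr_mem_hitTimes hqY hlt h1.le h1'.le)
    linarith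
  · exact Set.disjoint_left.1 hR
      ((mem_carrier_iff R q).2 ⟨hge, by linarith, h1.le, h1'.le⟩) hqY

lemma eq_extendLeft
    (hleast : IsLeast (hitTimes (b 0) (b 1) Y R.p R.u) (sInf (hitTimes (b 0) (b 1) Y R.p R.u)))
    (hR : Disjoint (R.carrier (b 0) (b 1)) Y) (hRX : R.IsPos (b 0) (b 1) X)
    (hline : ∀ x ∈ X, ∀ y ∈ Y, b.repr y 1 ≠ b.repr x 1)
    {D : Rect} (hD : IsRightHorizSub (b 0) R D) (hDY : Disjoint (D.interior (b 0) (b 1)) Y)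
    (hne : (D.leftSide (b 1) ∩ Y).Nonempty) : D = R.extendLeft (b 0) (b 1) Y := by
  obtain ⟨hs, hu, hp⟩ := hD
  set t₀ := sInf (hitTimes (b 0) (b 1) Y R.p R.u)
  have hDp : D.p = R.p - (D.s - R.s) • b 0 := by rw [hp, add_sub_cancel_right]
  have hle : t₀ ≤ D.s - R.s := by
    obtain ⟨y, ⟨c, hc0, hcu, rfl⟩, hy⟩ := hne
    rcases hs.lt_or_eq with hlt | heq
    · have hmem := sub_repr_mem_hitTimes (b := b) (p := R.p) (u := R.u) hy
        (by simp [hDp, hlt]) (by simp [hDp, hc0]) (by simp [hDp, hu, hcu])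
      simpa [hDp] using hleast.2 hmem
    · refine absurd hy (Set.disjoint_left.1 hR ((mem_carrier_iff R _).2 ?_))
      simp [hDp, heq, D.s_pos.le, hc0, hu, hcu]
  have hge : D.s - R.s ≤ t₀ := by
    by_contra! hlt
    obtain ⟨ht₀, c, hc0, hcu, hy⟩ := hleast.1
    have hc0' := hline _ hRX.1 _ hy
    have hcu' := hline _ hRX.2 _ hy
    simp only [repr_sub_smul_add_smul_one, repr_incEnd_one, ne_eq, add_eq_left,
      add_right_inj] at hc0' hcu'
    refine Set.disjoint_left.1 hDY ((mem_interior_iff D _).2 ?_) hy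
    simp only [hDp, repr_sub_smul_zero, repr_sub_smul_one, repr_sub_smul_add_smul_zero,
      repr_sub_smul_add_smul_one, ← hu]
    refine ⟨by linarith, by linarith [R.s_pos], ?_, ?_⟩
    · linarith [lt_of_le_of_ne hc0 (Ne.symm hc0')]
    · linarith [lt_of_le_of_ne hcu hcu']
  have ht : D.s - R.s = t₀ := le_antisymm hge hle
  ext
  · rw [hDp, ht, extendLeft_p]
  · rw [extendLeft_s]
    linarith
  · rw [extendLeft_u, hu]

lemma mul_lt_of_isPrimPos {M : ℝ} (hX : IsBoxDense b X M) (hR : R.IsPrimPos (b 0) (b 1) X) :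
    R.s * R.u < M := by
  by_contra! h
  obtain ⟨x, hx, ⟨h0, h0'⟩, h1, h1'⟩ := hX (b.repr R.p 0) (b.repr R.p 1) R.s R.u R.s_pos R.u_pos h
  have hxR : x ∈ R.carrier (b 0) (b 1) ∩ X :=
    ⟨(R.mem_carrier_iff x).2 ⟨h0.le, h0'.le, h1.le, h1'.le⟩, hx⟩
  rw [hR.2] at hxR
  rcases hxR with rfl | rfl
  · exact lt_irrefl _ h0
  · exact lt_irrefl _ (R.repr_incEnd_zero ▸ h0')

end Rect

lemma IsHyperbolicBasis.exists_pos_le_mul_of_mem_hitTimes {f : V →ₗ[ℝ] V} {lam : ℝ}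
    {b : Basis (Fin 2) ℝ V} {X Y : Set V} (hb : IsHyperbolicBasis f lam b) (hXY : Disjoint X Y)
    (hX : IsTorusFinite X) (hY : IsTorusFinite Y) (hfX : f '' X = X) (hfY : f '' Y = Y) :
    ∃ δ > 0, ∀ p ∈ X, ∀ u t : ℝ, t ∈ hitTimes (b 0) (b 1) Y p u → δ ≤ t * u := by
  obtain ⟨δ, hδ, h⟩ := hb.exists_pos_le_abs_repr_mul (hY.sub hX) (image_sub_eq hfY hfX)
  refine ⟨δ, hδ, fun p hp u t ⟨ht, c, hc0, hcu, hy⟩ => ?_⟩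
  have hc : c ≠ 0 := fun hc =>
    hb.repr_one_ne_of_mem hXY hX hY hfX hfY p hp _ hy (by simp [hc])
  have hdiff : b.repr (p - t • b 0 + c • b 1 - p) 0 * b.repr (p - t • b 0 + c • b 1 - p) 1
      = -(t * c) := by
    rw [map_sub, Finsupp.sub_apply, Finsupp.sub_apply, repr_sub_smul_add_smul_zero,
      repr_sub_smul_add_smul_one]
    ring
  have hδtc := h _ (Set.sub_mem_sub hy hp)
    (by rw [hdiff]; exact neg_ne_zero.2 (mul_ne_zero ht.ne' hc))
  rw [hdiff, abs_neg, abs_of_pos (mul_pos ht (hc0.lt_of_ne' hc))] at hδtc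
  nlinarith

theorem statement_12_general (A : Matrix (Fin 2) (Fin 2) ℤ)
    (lam : ℝ) (hlam : 1 < lam) (vs vu : V) (hvs : vs ≠ 0) (hvu : vu ≠ 0)
    (hAs : actR A vs = lam⁻¹ • vs) (hAu : actR A vu = lam • vu)
    (X Y : Set V) (hXY : Disjoint X Y) (hXne : X.Nonempty) (hYne : Y.Nonempty)
    (hXfin : IsTorusFinite X) (hXinv : IsInvariant A X)
    (hYfin : IsTorusFinite Y) (hYinv : IsInvariant A Y) :
    ∃ Dfun : Rect → Rect,
      (∀ Del : Rect, Del.IsPrimPos vs vu X → Disjoint (Del.carrier vs vu) Y →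
        (IsRightHorizSub vs Del (Dfun Del) ∧
          Disjoint ((Dfun Del).interior vs vu) Y ∧
          ((Dfun Del).leftSide vu ∩ Y).Nonempty) ∧
        (∀ D' : Rect,
          IsRightHorizSub vs Del D' → Disjoint (D'.interior vs vu) Y →
          (D'.leftSide vu ∩ Y).Nonempty → D' = Dfun Del)) ∧
      ∃ c C : ℝ, 1 < c ∧ c < C ∧
        ∀ Del : Rect, Del.IsPrimPos vs vu X → Disjoint (Del.carrier vs vu) Y →
          c < (Dfun Del).s / Del.s ∧ (Dfun Del).s / Del.s < C := by
  set f := (A.map (Int.cast : ℤ → ℝ)).mulVecLin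
  obtain ⟨b, rfl, rfl⟩ := exists_basis_of_apply_eq_smul (by simp) f
    ((inv_lt_one_of_one_lt₀ hlam).trans hlam).ne hvs hvu hAs hAu
  have hb : IsHyperbolicBasis f lam b := ⟨hlam, hAs, hAu⟩
  obtain ⟨MX, hMX, hX⟩ := hb.exists_isBoxDense hXfin hXne hXinv
  obtain ⟨MY, hMY, hY⟩ := hb.exists_isBoxDense hYfin hYne hYinv
  obtain ⟨δX, hδX, hareaX⟩ := hb.exists_pos_le_mul_of_isPos hXfin hXinv
  obtain ⟨δ, hδ, hhit⟩ := hb.exists_pos_le_mul_of_mem_hitTimes hXY hXfin hYfin hXinv hYinv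
  have hleast (R : Rect) := isLeast_hitTimes hYfin
    ((exists_mem_hitTimes_mul_lt hY hMY R.p R.u_pos).imp fun _ => And.left)
  refine ⟨Rect.extendLeft (b 0) (b 1) Y, fun R hR hRY =>
    ⟨⟨R.isRightHorizSub_extendLeft _ _ _, R.disjoint_interior_extendLeft (hleast R).2 hRY,
      R.leftSide_extendLeft_inter_nonempty (hleast R).1⟩,
    fun _ => R.eq_extendLeft (hleast R) hRY hR.1
      (hb.repr_one_ne_of_mem hXY hXfin hYfin hXinv hYinv)⟩,
    1 + δ / MX, 1 + δ / MX + MY / δX, lt_add_of_pos_right _ (div_pos hδ hMX),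
    lt_add_of_pos_right _ (div_pos hMY hδX), fun R hR hRY => ?_⟩
  have hratio := div_mem_Ioo_of_mul_bounds R.s_pos R.u_pos hδ hδX
    (hhit R.p hR.1.1 R.u _ (hleast R).1) (sInf_hitTimes_mul_lt hY hMY R.p R.u_pos)
    (R.mul_lt_of_isPrimPos hX hR) (hareaX R hR.1)
  rw [Rect.extendLeft_s_div]
  exact ⟨by linarith [hratio.1], by linarith [hratio.2, div_pos hδ hMX]⟩

/-- (i) every primitive positive `𝒳`-rectangle `Δ` disjoint from
`𝒴̃` is a right horizontal subrectangle of a unique rectangle `D(Δ)` whose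
interior is disjoint from `𝒴̃` and whose left unstable side meets `𝒴̃`;
(ii) the ratios `ℓ^s(D(Δ))/ℓ^s(Δ)` are pinched between constants `1 < c < C`. -/
theorem statement_12 (A : Matrix (Fin 2) (Fin 2) ℤ) (hdet : A.det = 1) (htr : 2 < A.trace)
    (lam : ℝ) (hlam : 1 < lam) (vs vu : V) (hvs : vs ≠ 0) (hvu : vu ≠ 0)
    (hAs : actR A vs = lam⁻¹ • vs) (hAu : actR A vu = lam • vu)
    (X Y : Set V) (hXY : Disjoint X Y) (hXne : X.Nonempty) (hYne : Y.Nonempty)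
    (hXfin : IsTorusFinite X) (hXinv : IsInvariant A X)
    (hYfin : IsTorusFinite Y) (hYinv : IsInvariant A Y) :
    ∃ Dfun : Rect → Rect,
      (∀ Del : Rect, Del.IsPrimPos vs vu X → Disjoint (Del.carrier vs vu) Y →
        (IsRightHorizSub vs Del (Dfun Del) ∧
          Disjoint ((Dfun Del).interior vs vu) Y ∧
          ((Dfun Del).leftSide vu ∩ Y).Nonempty) ∧
        (∀ D' : Rect,
          IsRightHorizSub vs Del D' → Disjoint (D'.interior vs vu) Y →
          (D'.leftSide vu ∩ Y).Nonempty → D' = Dfun Del)) ∧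
      ∃ c C : ℝ, 1 < c ∧ c < C ∧
        ∀ Del : Rect, Del.IsPrimPos vs vu X → Disjoint (Del.carrier vs vu) Y →
          c < (Dfun Del).s / Del.s ∧ (Dfun Del).s / Del.s < C :=
  statement_12_general A lam hlam vs vu hvs hvu hAs hAu X Y hXY hXne hYne hXfin hXinv hYfin hYinv

end Paper
end

section
/- Let A be a 2×2 integer matrix with determinant 1 and trace > 2. Then every rectangle whose increasing diagonal has its origin and endpoint in ℤ², and every rectangle whose decreasing diagonal has its origin and endpoint in ℤ² (that is, every positive or negative (0,0)-rectangle, where (0,0) denotes the singleton {0} ⊆ 𝕋²), contains a point of the set {(0,1/2), (1/2,0), (1/2,1/2)} + ℤ². -/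
/- Common setup: following the paper, we identify each subset of the torus
`𝕋² = ℝ²/ℤ²` with its (`ℤ²`-saturated) lift to `ℝ²`. -/

open Matrix Set
open scoped Pointwise

namespace Paper

/- The diagonal of a `ℤ²`-rectangle joins two distinct lattice points `p` and `p + m`. If `g` is
the gcd of the coordinates of `m`, then `m / g` has an odd coordinate, so the point
`p + m / (2g)` of the diagonal lies in `(½ℤ)² \ ℤ²`. The endpoints are distinct because `v^s`
and `v^u` are eigenvectors for different eigenvalues, hence linearly independent. -/

theorem sub_mem_lattice {x y : V} (hx : x ∈ lattice) (hy : y ∈ lattice) : x - y ∈ lattice := by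
  obtain ⟨m, rfl⟩ := hx
  obtain ⟨n, rfl⟩ := hy
  exact ⟨m - n, by ext i; simp⟩

theorem add_mem_halfPoints {x y : V} (hx : x ∈ halfPoints) (hy : y ∈ lattice) :
    x + y ∈ halfPoints := by
  obtain ⟨w, hw, m, hm⟩ := hx
  obtain ⟨n, rfl⟩ := hy
  refine ⟨w, hw, m + n, ?_⟩
  ext i
  have := congrFun hm i
  simp only [Pi.sub_apply, Pi.add_apply, Int.cast_add] at this ⊢
  linarith

theorem half_mem_halfPoints (n : Fin 2 → ℤ) (hn : ¬(2 ∣ n 0 ∧ 2 ∣ n 1)) :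
    (fun i => (n i : ℝ) / 2) ∈ halfPoints := by
  refine ⟨fun i => (n i % 2 : ℤ) / 2, ?_, fun i => n i / 2, ?_⟩
  · simp only [Int.dvd_iff_emod_eq_zero] at hn
    rcases Int.emod_two_eq_zero_or_one (n 0) with h0 | h0 <;>
      rcases Int.emod_two_eq_zero_or_one (n 1) with h1 | h1
    · exact absurd ⟨h0, h1⟩ hn
    all_goals
      simp only [mem_insert_iff, mem_singleton_iff, funext_iff, Fin.forall_fin_two]
      norm_num [h0, h1]
  · ext i
    have h : (n i : ℝ) = (n i % 2 : ℤ) + 2 * (n i / 2 : ℤ) := by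
      exact_mod_cast (Int.emod_add_mul_ediv (n i) 2).symm
    simp only [Pi.sub_apply]
    rw [h]
    ring

theorem segment_inter_halfPoints_nonempty {p q : V} (hp : p ∈ lattice) (hq : q ∈ lattice)
    (hpq : p ≠ q) : (segment ℝ p q ∩ halfPoints).Nonempty := by
  obtain ⟨m, hm⟩ := sub_mem_lattice hq hp
  set g := Int.gcd (m 0) (m 1)
  have hg : 0 < g := by
    refine Nat.pos_of_ne_zero fun h => hpq ?_
    obtain ⟨h0, h1⟩ := Int.gcd_eq_zero_iff.mp h
    refine (sub_eq_zero.mp ?_).symm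
    rw [← hm]
    ext i
    fin_cases i <;> simp [h0, h1]
  set n : Fin 2 → ℤ := fun i => m i / g
  have hmn : ∀ i, m i = g * n i := by
    intro i
    refine (Int.mul_ediv_cancel' ?_).symm
    fin_cases i
    exacts [Int.gcd_dvd_left .., Int.gcd_dvd_right ..]
  have hn : ¬(2 ∣ n 0 ∧ 2 ∣ n 1) := by
    rintro ⟨h0, h1⟩
    have hcop : Int.gcd (n 0) (n 1) = 1 := Int.gcd_div_gcd_div_gcd hg
    have := Int.dvd_gcd h0 h1
    rw [hcop] at this
    norm_num at this
  have hpoint : p + (1 / (2 * g) : ℝ) • (q - p) = (fun i => (n i : ℝ) / 2) + p := by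
    ext i
    have hmi : (m i : ℝ) = g * n i := by exact_mod_cast hmn i
    rw [← hm]
    simp only [Pi.add_apply, Pi.smul_apply, smul_eq_mul, hmi]
    field_simp
    ring
  refine ⟨_, ?_, hpoint ▸ add_mem_halfPoints (half_mem_halfPoints n hn) hp⟩
  rw [segment_eq_image']
  refine ⟨_, ⟨by positivity, ?_⟩, rfl⟩
  rw [div_le_one (by positivity)]
  have : (1 : ℝ) ≤ g := by exact_mod_cast hg
  linarith

theorem smul_add_smul_ne_zero_of_apply_eq_smul {K M : Type*} [Field K] [AddCommGroup M]
    [Module K M] {f : Module.End K M} {μ ν : K} {x y : M} (hx : f x = μ • x) (hy : f y = ν • y)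
    (hμν : μ ≠ ν) (hy0 : y ≠ 0) {a b : K} (hb : b ≠ 0) : a • x + b • y ≠ 0 := by
  intro h
  have key : f (a • x + b • y) - μ • (a • x + b • y) = (b * (ν - μ)) • y := by
    simp only [map_add, map_smul, hx, hy]
    module
  rw [h, map_zero, smul_zero, sub_zero, eq_comm, smul_eq_zero] at key
  exact key.elim (mul_ne_zero hb (sub_ne_zero.mpr hμν.symm)) hy0

namespace Rect

variable {vs vu : V} (R : Rect)

theorem segment_p_incEnd_subset_carrier : segment ℝ R.p (R.incEnd vs vu) ⊆ R.carrier vs vu := by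
  rw [segment_eq_image']
  rintro _ ⟨θ, ⟨h0, h1⟩, rfl⟩
  refine ⟨θ * R.s, θ * R.u, by nlinarith [R.s_pos], by nlinarith [R.s_pos],
    by nlinarith [R.u_pos], by nlinarith [R.u_pos], ?_⟩
  simp only [incEnd]
  module

theorem segment_decOrigin_decEnd_subset_carrier :
    segment ℝ (R.decOrigin vs) (R.decEnd vu) ⊆ R.carrier vs vu := by
  rw [segment_eq_image']
  rintro _ ⟨θ, ⟨h0, h1⟩, rfl⟩
  refine ⟨(1 - θ) * R.s, θ * R.u, by nlinarith [R.s_pos], by nlinarith [R.s_pos],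
    by nlinarith [R.u_pos], by nlinarith [R.u_pos], ?_⟩
  simp only [decOrigin, decEnd]
  module

end Rect

theorem statement_13_general (A : Matrix (Fin 2) (Fin 2) ℤ)
    (lam : ℝ) (hlam : 1 < lam) (vs vu : V) (hvu : vu ≠ 0)
    (hAs : actR A vs = lam⁻¹ • vs) (hAu : actR A vu = lam • vu) :
    ∀ R : Rect, (R.IsPos vs vu lattice ∨ R.IsNeg vs vu lattice) →
      (R.carrier vs vu ∩ halfPoints).Nonempty := by
  have hlam_ne : lam⁻¹ ≠ lam := (inv_lt_one_of_one_lt₀ hlam |>.trans hlam).ne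
  have hindep (a b : ℝ) (hb : b ≠ 0) : a • vs + b • vu ≠ 0 :=
    smul_add_smul_ne_zero_of_apply_eq_smul (f := Matrix.toLin' (A.map (Int.cast : ℤ → ℝ)))
      hAs hAu hlam_ne hvu hb
  rintro R (⟨hp, hq⟩ | ⟨hp, hq⟩)
  · refine (segment_inter_halfPoints_nonempty hp hq fun h => hindep R.s R.u R.u_pos.ne' ?_).mono
      (inter_subset_inter_left _ R.segment_p_incEnd_subset_carrier)
    rw [← sub_eq_zero.mpr h.symm]
    simp only [Rect.incEnd]
    abel
  · refine (segment_inter_halfPoints_nonempty hp hq fun h => hindep (-R.s) R.u R.u_pos.ne' ?_).mono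
      (inter_subset_inter_left _ R.segment_decOrigin_decEnd_subset_carrier)
    simp only [Rect.decOrigin, Rect.decEnd] at h
    rw [← sub_eq_zero.mpr h.symm]
    module

/-- every positive or negative `(0,0)`-rectangle (i.e. rectangle
whose increasing resp. decreasing diagonal has both endpoints in `ℤ²`) contains
a point of `{(0,1/2), (1/2,0), (1/2,1/2)} + ℤ²`. -/
theorem statement_13 (A : Matrix (Fin 2) (Fin 2) ℤ) (hdet : A.det = 1) (htr : 2 < A.trace)
    (lam : ℝ) (hlam : 1 < lam) (vs vu : V) (hvs : vs ≠ 0) (hvu : vu ≠ 0)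
    (hAs : actR A vs = lam⁻¹ • vs) (hAu : actR A vu = lam • vu) :
    ∀ R : Rect, (R.IsPos vs vu lattice ∨ R.IsNeg vs vu lattice) →
      (R.carrier vs vu ∩ halfPoints).Nonempty :=
  statement_13_general A lam hlam vs vu hvu hAs hAu

end Paper
end

section
/- For every integer k ≥ 2, let A_k be the matrix with rows (k, k−1) and (1, 1), and define rectangles with respect to fixed eigenvectors v^s, v^u of A_k. Then there exist a positive rectangle (increasing-diagonal origin and endpoint in ℤ²) and a negative rectangle (decreasing-diagonal origin and endpoint in ℤ²) both disjoint from the set (1/2,1/2) + ℤ², and there exist a positive rectangle and a negative rectangle whose respective diagonal origins and endpoints lie in (1/2,1/2) + ℤ² and which are disjoint from ℤ². -/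
/-!
By the second row of `A_k`, an eigenvector for the eigenvalue `μ` is a multiple of `(μ - 1, 1)`.
Write `r = λ⁻¹`, `Δ = λ - r`, and give a point `U (r - 1, 1) + W (λ - 1, 1)` the eigen-coordinates
`(U, W)`. Then `(0, 1)` has coordinates `((λ - 1)/Δ, (1 - r)/Δ)` and `(1, 0)` has `(-1/Δ, 1/Δ)`, so
the rectangles with diagonals from `0` to `(0, 1)` and to `(1, 0)` have endpoints in `ℤ²`, and
their signed areas have opposite signs: one is positive and the other negative, whatever the
orientations of `v^s` and `v^u`. Neither meets `(1/2, 1/2) + ℤ²`. A point `(x, y)` of the second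
one has `|y| ≤ 1/Δ`, and `1/Δ < 1/2` because `Δ² = (k + 1)² - 4 > 4`. In the first one
`0 ≤ y ≤ 1` forces `y = 1/2`, and then `x = Δ W - (1 - r)/2` with `0 ≤ Δ W ≤ 1 - r`, so
`|x| < 1/2`. Translating by `(1/2, 1/2)` exchanges `ℤ²` and `(1/2, 1/2) + ℤ²` and gives the other
two rectangles.
-/

/- Common setup: following the paper, we identify each subset of the torus
`𝕋² = ℝ²/ℤ²` with its (`ℤ²`-saturated) lift to `ℝ²`. -/

open Matrix Set
open scoped Pointwise

namespace Paper

theorem half_le_abs_intCast_add_half (m : ℤ) : 1 / 2 ≤ |(m : ℝ) + 1 / 2| := by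
  rcases le_or_gt 0 m with hm | hm
  · have : (0 : ℝ) ≤ m := by exact_mod_cast hm
    exact le_abs.2 (Or.inl (by linarith))
  · have : (m : ℝ) ≤ -1 := by exact_mod_cast Int.le_sub_one_of_lt hm
    exact le_abs.2 (Or.inr (by linarith))

theorem vec_mem_lattice (m n : ℤ) : ![(m : ℝ), n] ∈ lattice :=
  ⟨![m, n], by ext i; fin_cases i <;> rfl⟩

theorem mem_halfCenter_iff {q : V} :
    q ∈ halfCenter ↔ ∃ m n : ℤ, q 0 = m + 1 / 2 ∧ q 1 = n + 1 / 2 := by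
  simp only [halfCenter, lattice, mem_ofPred_eq, mem_range, funext_iff, Fin.forall_fin_two]
  constructor
  · rintro ⟨m, h0, h1⟩
    exact ⟨m 0, m 1, by simp at h0; linarith, by simp at h1; linarith⟩
  · rintro ⟨m, n, h0, h1⟩
    exact ⟨![m, n], by simp [h0], by simp [h1]⟩

theorem sub_half_mem_halfCenter {q : V} (hq : q ∈ lattice) :
    q - ![1 / 2, 1 / 2] ∈ halfCenter := by
  obtain ⟨m, rfl⟩ := hq
  refine mem_halfCenter_iff.2 ⟨m 0 - 1, m 1 - 1, ?_, ?_⟩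
  · simp
    ring
  · simp
    ring

theorem actR_fin_two_of (a b c e : ℤ) (v : V) :
    actR !![a, b; c, e] v = ![a * v 0 + b * v 1, c * v 0 + e * v 1] := by
  simp [actR]

theorem eq_smul_of_actR_eq_smul {a b : ℤ} {μ : ℝ} {v : V}
    (h : actR !![a, b; 1, 1] v = μ • v) : v = v 1 • ![μ - 1, 1] := by
  have h1 : v 0 + v 1 = μ * v 1 := by simpa [actR_fin_two_of] using congrFun h 1
  have h0 : v 0 = v 1 * (μ - 1) := by linarith
  ext i
  fin_cases i <;> simp [h0]

theorem exists_eq_smul_of_actR_eq_smul {a b : ℤ} {μ : ℝ} {v : V} (hv : v ≠ 0)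
    (h : actR !![a, b; 1, 1] v = μ • v) : ∃ c : ℝ, c ≠ 0 ∧ v = c • ![μ - 1, 1] := by
  have hv' := eq_smul_of_actR_eq_smul h
  exact ⟨v 1, fun h0 => hv (by rw [hv', h0, zero_smul]), hv'⟩

theorem charpoly_eq_zero_of_actR_eq_smul {a b : ℤ} {μ : ℝ} {v : V} (hv : v ≠ 0)
    (h : actR !![a, b; 1, 1] v = μ • v) : μ ^ 2 - (a + 1) * μ + (a - b) = 0 := by
  obtain ⟨c, hc, rfl⟩ := exists_eq_smul_of_actR_eq_smul hv h
  have h0 : a * (c * (μ - 1)) + b * c = μ * (c * (μ - 1)) := by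
    simpa [actR_fin_two_of] using congrFun h 0
  apply mul_right_cancel₀ hc
  linear_combination -h0

theorem two_lt_sub_inv {k lam : ℝ} (hk : 2 ≤ k) (hlam : 1 < lam)
    (h : lam ^ 2 - (k + 1) * lam + 1 = 0) : 2 < lam - lam⁻¹ := by
  have hinv : lam⁻¹ = k + 1 - lam := by
    field_simp
    linarith
  rw [hinv]
  nlinarith

def parallelogram (vs vu x : V) (A B : ℝ) : Set V :=
  {q | ∃ a ∈ uIcc 0 A, ∃ b ∈ uIcc 0 B, q = x + a • vs + b • vu}

theorem parallelogram_smul_smul (vs vu x : V) (A B c d : ℝ) :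
    parallelogram (c • vs) (d • vu) x A B = parallelogram vs vu x (A * c) (B * d) := by
  have hc : uIcc 0 (A * c) = (· * c) '' uIcc 0 A := by rw [image_mul_const_uIcc, zero_mul]
  have hd : uIcc 0 (B * d) = (· * d) '' uIcc 0 B := by rw [image_mul_const_uIcc, zero_mul]
  ext q
  simp only [parallelogram, mem_ofPred_eq, hc, hd, exists_mem_image, smul_smul]

/-- The rectangle `parallelogram vs vu x A B`, with its corner and side lengths normalized. -/
def Rect.ofDiagonal (vs vu x : V) (A B : ℝ) (hA : A ≠ 0) (hB : B ≠ 0) : Rect :=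
  ⟨x + min A 0 • vs + min B 0 • vu, |A|, |B|, abs_pos.2 hA, abs_pos.2 hB⟩

theorem min_add_mem_uIcc {A a : ℝ} (ha : a ∈ Icc 0 |A|) : min A 0 + a ∈ uIcc 0 A := by
  rcases le_total 0 A with hA | hA
  · simpa [hA, abs_of_nonneg, uIcc_of_le] using ha
  · rw [min_eq_left hA, abs_of_nonpos hA] at *
    rw [uIcc_of_ge hA]
    exact ⟨by linarith [ha.1], by linarith [ha.2]⟩

theorem Rect.carrier_ofDiagonal_subset (vs vu x : V) (A B : ℝ) (hA : A ≠ 0) (hB : B ≠ 0) :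
    (Rect.ofDiagonal vs vu x A B hA hB).carrier vs vu ⊆ parallelogram vs vu x A B := by
  rintro q ⟨a, b, ha0, haA, hb0, hbB, rfl⟩
  exact ⟨_, min_add_mem_uIcc ⟨ha0, haA⟩, _, min_add_mem_uIcc ⟨hb0, hbB⟩, by
    simp only [Rect.ofDiagonal]; module⟩

section Diagonal

variable {E X : Set V} {vs vu x : V} {A B : ℝ}

theorem Rect.isPos_ofDiagonal (hA : A ≠ 0) (hB : B ≠ 0) (hAB : 0 < A * B) (hx : x ∈ E)
    (hy : x + A • vs + B • vu ∈ E) : (Rect.ofDiagonal vs vu x A B hA hB).IsPos vs vu E := by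
  simp only [Rect.IsPos, Rect.incEnd, Rect.ofDiagonal]
  rcases pos_and_pos_or_neg_and_neg_of_mul_pos hAB with ⟨hA, hB⟩ | ⟨hA, hB⟩
  · simp only [min_eq_right hA.le, min_eq_right hB.le, abs_of_pos hA, abs_of_pos hB, zero_smul,
      add_zero]
    exact ⟨hx, hy⟩
  · simp only [min_eq_left hA.le, min_eq_left hB.le, abs_of_neg hA, abs_of_neg hB]
    exact ⟨hy, by convert hx using 1; module⟩

theorem Rect.isNeg_ofDiagonal (hA : A ≠ 0) (hB : B ≠ 0) (hAB : A * B < 0) (hx : x ∈ E)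
    (hy : x + A • vs + B • vu ∈ E) : (Rect.ofDiagonal vs vu x A B hA hB).IsNeg vs vu E := by
  simp only [Rect.IsNeg, Rect.decOrigin, Rect.decEnd, Rect.ofDiagonal]
  rcases mul_neg_iff.1 hAB with ⟨hA, hB⟩ | ⟨hA, hB⟩
  · simp only [min_eq_right hA.le, min_eq_left hB.le, abs_of_pos hA, abs_of_neg hB, zero_smul,
      add_zero]
    exact ⟨by convert hy using 1; module, by convert hx using 1; module⟩
  · simp only [min_eq_left hA.le, min_eq_right hB.le, abs_of_neg hA, abs_of_pos hB, zero_smul,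
      add_zero]
    exact ⟨by convert hx using 1; module, hy⟩

theorem exists_isPos_of_mul_pos (hAB : 0 < A * B) (hx : x ∈ E) (hy : x + A • vs + B • vu ∈ E)
    (hX : Disjoint (parallelogram vs vu x A B) X) :
    ∃ R : Rect, R.IsPos vs vu E ∧ Disjoint (R.carrier vs vu) X :=
  have hA := left_ne_zero_of_mul hAB.ne'
  have hB := right_ne_zero_of_mul hAB.ne'
  ⟨_, Rect.isPos_ofDiagonal hA hB hAB hx hy, hX.mono_left (Rect.carrier_ofDiagonal_subset ..)⟩

theorem exists_isNeg_of_mul_neg (hAB : A * B < 0) (hx : x ∈ E) (hy : x + A • vs + B • vu ∈ E)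
    (hX : Disjoint (parallelogram vs vu x A B) X) :
    ∃ R : Rect, R.IsNeg vs vu E ∧ Disjoint (R.carrier vs vu) X :=
  have hA := left_ne_zero_of_mul hAB.ne
  have hB := right_ne_zero_of_mul hAB.ne
  ⟨_, Rect.isNeg_ofDiagonal hA hB hAB hx hy, hX.mono_left (Rect.carrier_ofDiagonal_subset ..)⟩

theorem exists_isPos_and_isNeg {A' B' : ℝ} (hsign : A * B * (A' * B') < 0) (hx : x ∈ E)
    (hy : x + A • vs + B • vu ∈ E) (hy' : x + A' • vs + B' • vu ∈ E)
    (hX : Disjoint (parallelogram vs vu x A B) X)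
    (hX' : Disjoint (parallelogram vs vu x A' B') X) :
    (∃ R : Rect, R.IsPos vs vu E ∧ Disjoint (R.carrier vs vu) X) ∧
      (∃ R : Rect, R.IsNeg vs vu E ∧ Disjoint (R.carrier vs vu) X) := by
  rcases mul_neg_iff.1 hsign with ⟨h, h'⟩ | ⟨h, h'⟩
  · exact ⟨exists_isPos_of_mul_pos h hx hy hX, exists_isNeg_of_mul_neg h' hx hy' hX'⟩
  · exact ⟨exists_isPos_of_mul_pos h' hx hy' hX', exists_isNeg_of_mul_neg h hx hy hX⟩

end Diagonal

section Eigenbasis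

variable {lam r : ℝ}

theorem vecZeroOne_eq (h : lam - r ≠ 0) :
    (![0, 1] : V) =
      ((lam - 1) / (lam - r)) • ![r - 1, 1] + ((1 - r) / (lam - r)) • ![lam - 1, 1] := by
  ext i
  fin_cases i <;> simp <;> field_simp <;> ring

theorem vecOneZero_eq (h : lam - r ≠ 0) :
    (![1, 0] : V) = (-1 / (lam - r)) • ![r - 1, 1] + (1 / (lam - r)) • ![lam - 1, 1] := by
  ext i
  fin_cases i <;> simp <;> field_simp <;> ring

theorem smul_add_smul_notMem_halfCenter_of_vertical (hr0 : 0 < r) (hr1 : r < 1)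
    (hlam : 1 < lam) {U W : ℝ} (hU : U ∈ uIcc 0 ((lam - 1) / (lam - r)))
    (hW : W ∈ uIcc 0 ((1 - r) / (lam - r))) :
    U • ![r - 1, 1] + W • ![lam - 1, 1] ∉ halfCenter := by
  have hΔ : 0 < lam - r := by linarith
  rw [uIcc_of_le (by positivity)] at hU hW
  rw [mem_halfCenter_iff]
  rintro ⟨m, n, hm, hn⟩
  replace hm : U * (r - 1) + W * (lam - 1) = m + 1 / 2 := by simpa using hm
  replace hn : U + W = n + 1 / 2 := by simpa using hn
  have hUW : U + W ≤ 1 := by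
    have := add_le_add hU.2 hW.2
    rwa [← add_div, show lam - 1 + (1 - r) = lam - r by ring, div_self hΔ.ne'] at this
  have hn0 : n = 0 := by
    have : (-1 : ℝ) < n ∧ (n : ℝ) < 1 := ⟨by linarith [hU.1, hW.1], by linarith⟩
    have : -1 < n ∧ n < 1 := by exact_mod_cast this
    omega
  have hWΔ : W * (lam - r) ≤ 1 - r := (le_div_iff₀ hΔ).1 hW.2
  have hx : (m : ℝ) + 1 / 2 = W * (lam - r) - (1 - r) / 2 := by
    subst hn0
    linear_combination -hm + (r - 1) * hn
  have : |(m : ℝ) + 1 / 2| < 1 / 2 := by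
    rw [hx, abs_lt]
    constructor <;> nlinarith [mul_nonneg hW.1 hΔ.le]
  exact this.not_ge (half_le_abs_intCast_add_half m)

theorem smul_add_smul_notMem_halfCenter_of_horizontal (hΔ : 2 < lam - r)
    {U W : ℝ} (hU : U ∈ uIcc 0 (-1 / (lam - r))) (hW : W ∈ uIcc 0 (1 / (lam - r))) :
    U • ![r - 1, 1] + W • ![lam - 1, 1] ∉ halfCenter := by
  have hΔ0 : 0 < lam - r := by linarith
  have hsmall : 1 / (lam - r) < 1 / 2 := one_div_lt_one_div_of_lt two_pos hΔ
  rw [uIcc_of_ge (by rw [neg_div]; exact neg_nonpos.2 (by positivity))] at hU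
  rw [uIcc_of_le (by positivity)] at hW
  rw [mem_halfCenter_iff]
  rintro ⟨-, n, -, hn⟩
  replace hn : U + W = n + 1 / 2 := by simpa using hn
  have : |(n : ℝ) + 1 / 2| < 1 / 2 := by
    rw [← hn, abs_lt]
    constructor <;> linarith [hU.1, hU.2, hW.1, hW.2, neg_div (lam - r) 1]
  exact this.not_ge (half_le_abs_intCast_add_half n)

end Eigenbasis

theorem exists_isPos_and_isNeg_of_eigenbasis {lam r c d : ℝ} (hr0 : 0 < r) (hr1 : r < 1)
    (hΔ : 2 < lam - r) (hc : c ≠ 0) (hd : d ≠ 0) {E X : Set V} {x : V}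
    (hE : ∀ q ∈ lattice, x + q ∈ E) (hX : ∀ q ∈ X, q - x ∈ halfCenter) :
    (∃ R : Rect, R.IsPos (c • ![r - 1, 1]) (d • ![lam - 1, 1]) E ∧
        Disjoint (R.carrier (c • ![r - 1, 1]) (d • ![lam - 1, 1])) X) ∧
      (∃ R : Rect, R.IsNeg (c • ![r - 1, 1]) (d • ![lam - 1, 1]) E ∧
        Disjoint (R.carrier (c • ![r - 1, 1]) (d • ![lam - 1, 1])) X) := by
  have hΔ0 : 0 < lam - r := by linarith
  have hx : x ∈ E := by simpa using hE 0 ⟨0, funext fun _ => Int.cast_zero⟩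
  have hvertex : ∀ {U W : ℝ}, U • ![r - 1, 1] + W • ![lam - 1, 1] ∈ lattice →
      x + (U / c) • c • ![r - 1, 1] + (W / d) • d • ![lam - 1, 1] ∈ E := by
    intro U W h
    simpa only [smul_smul, div_mul_cancel₀ _ hc, div_mul_cancel₀ _ hd, add_assoc] using hE _ h
  have hdisj : ∀ {U W : ℝ},
      (∀ a ∈ uIcc 0 U, ∀ b ∈ uIcc 0 W, a • ![r - 1, 1] + b • ![lam - 1, 1] ∉ halfCenter) →
      Disjoint (parallelogram (c • ![r - 1, 1]) (d • ![lam - 1, 1]) x (U / c) (W / d)) X := by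
    intro U W h
    rw [parallelogram_smul_smul, div_mul_cancel₀ _ hc, div_mul_cancel₀ _ hd, disjoint_left]
    rintro q ⟨a, ha, b, hb, rfl⟩ hq
    exact h a ha b hb (by simpa only [add_assoc, add_sub_cancel_left] using hX _ hq)
  refine exists_isPos_and_isNeg (A := (lam - 1) / (lam - r) / c) (B := (1 - r) / (lam - r) / d)
    (A' := -1 / (lam - r) / c) (B' := 1 / (lam - r) / d) ?_ hx
    (hvertex ?_) (hvertex ?_)
    (hdisj fun _ ha _ hb =>
      smul_add_smul_notMem_halfCenter_of_vertical hr0 hr1 (by linarith) ha hb)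
    (hdisj fun _ ha _ hb => smul_add_smul_notMem_halfCenter_of_horizontal hΔ ha hb)
  · rw [show ∀ U W U' W' : ℝ, U / c * (W / d) * (U' / c * (W' / d)) =
        U * W * (U' * W') / (c * d) ^ 2 from fun _ _ _ _ => by ring]
    refine div_neg_of_neg_of_pos (mul_neg_of_pos_of_neg ?_ ?_) (by positivity)
    · exact mul_pos (div_pos (by linarith) hΔ0) (div_pos (by linarith) hΔ0)
    · exact mul_neg_of_neg_of_pos (div_neg_of_neg_of_pos (by norm_num) hΔ0) (by positivity)
  · rw [← vecZeroOne_eq hΔ0.ne']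
    simpa using vec_mem_lattice 0 1
  · rw [← vecOneZero_eq hΔ0.ne']
    simpa using vec_mem_lattice 1 0

/-- for the matrix `A_k = !![k, k-1; 1, 1]` (`k ≥ 2`), there are
positive and negative `(0,0)`-rectangles disjoint from `(1/2,1/2) + ℤ²`, and
positive and negative `(1/2,1/2)`-rectangles disjoint from `ℤ²`. -/
theorem statement_14 (k : ℕ) (hk : 2 ≤ k)
    (lam : ℝ) (hlam : 1 < lam) (vs vu : V) (hvs : vs ≠ 0) (hvu : vu ≠ 0)
    (hAs : actR !![(k : ℤ), (k : ℤ) - 1; 1, 1] vs = lam⁻¹ • vs)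
    (hAu : actR !![(k : ℤ), (k : ℤ) - 1; 1, 1] vu = lam • vu) :
    (∃ R : Rect, R.IsPos vs vu lattice ∧ Disjoint (R.carrier vs vu) halfCenter) ∧
    (∃ R : Rect, R.IsNeg vs vu lattice ∧ Disjoint (R.carrier vs vu) halfCenter) ∧
    (∃ R : Rect, R.IsPos vs vu halfCenter ∧ Disjoint (R.carrier vs vu) lattice) ∧
    (∃ R : Rect, R.IsNeg vs vu halfCenter ∧ Disjoint (R.carrier vs vu) lattice) := by
  have hchar : lam ^ 2 - (k + 1) * lam + 1 = 0 := by
    have := charpoly_eq_zero_of_actR_eq_smul hvu hAu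
    push_cast at this
    linarith
  have hΔ : 2 < lam - lam⁻¹ := two_lt_sub_inv (by exact_mod_cast hk) hlam hchar
  obtain ⟨c, hc, rfl⟩ := exists_eq_smul_of_actR_eq_smul hvs hAs
  obtain ⟨d, hd, rfl⟩ := exists_eq_smul_of_actR_eq_smul hvu hAu
  have hr0 : 0 < lam⁻¹ := inv_pos.2 (by linarith)
  have hr1 : lam⁻¹ < 1 := inv_lt_one_of_one_lt₀ hlam
  obtain ⟨hpos, hneg⟩ := exists_isPos_and_isNeg_of_eigenbasis hr0 hr1 hΔ hc hd (x := 0)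
    (E := lattice) (X := halfCenter) (fun q hq => by simpa using hq) (fun q hq => by simpa using hq)
  obtain ⟨hpos', hneg'⟩ := exists_isPos_and_isNeg_of_eigenbasis hr0 hr1 hΔ hc hd
    (x := ![1 / 2, 1 / 2]) (E := halfCenter) (X := lattice)
    (fun q hq => by rwa [halfCenter, mem_ofPred_eq, add_sub_cancel_left])
    (fun q hq => sub_half_mem_halfCenter hq)
  exact ⟨hpos, hneg, hpos', hneg'⟩

end Paper
end
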